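/- arXiv:2512.14518 — 3 statements merged into one kernel-verified Lean document; each statement's English description precedes it below -/
import Mathlib

section
/- There exists a set S ⊆ ℝ² that is countably infinite, bounded, not collinear, and such that no affine line meets S in exactly two points (equivalently: for any two distinct points p, q ∈ S there exists r ∈ S with r ≠ p, r ≠ q and p, q, r collinear). -/
/-- An affine line: an affine subspace whose direction is one-dimensional. -/
def IsLine (L : AffineSubspace ℝ (EuclideanSpace ℝ (Fin 2))) : Prop :=
  Module.finrank ℝ L.direction = 1

noncomputable def ratPt (q : ℚ × ℚ) : EuclideanSpace ℝ (Fin 2) :=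
  (WithLp.equiv 2 (Fin 2 → ℝ)).symm ![(q.1 : ℝ), (q.2 : ℝ)]

lemma ratPt_apply0 (q : ℚ × ℚ) : ratPt q 0 = (q.1 : ℝ) := rfl
lemma ratPt_apply1 (q : ℚ × ℚ) : ratPt q 1 = (q.2 : ℝ) := rfl

def ratSq : Set (ℚ × ℚ) := {q | |q.1| ≤ 1 ∧ |q.2| ≤ 1}

theorem exists_countable_bounded_counterexample :
    ∃ S : Set (EuclideanSpace ℝ (Fin 2)),
      S.Countable ∧ S.Infinite ∧ Bornology.IsBounded S ∧ ¬ Collinear ℝ S ∧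
      ∀ L : AffineSubspace ℝ (EuclideanSpace ℝ (Fin 2)), IsLine L →
        ¬ ∃ p q, p ≠ q ∧ (L : Set (EuclideanSpace ℝ (Fin 2))) ∩ S = {p, q} := by
  refine ⟨ratPt '' ratSq, (Set.to_countable ratSq).image _, ?_, ?_, ?_, ?_⟩
  · -- infinite
    apply Set.infinite_of_injective_forall_mem
      (f := fun n : ℕ => ratPt (1/(n+1), 0))
    · intro m n hmn
      have := congrArg (fun x => x 0) hmn
      simp only [ratPt_apply0] at this
      have h2 : (1 : ℚ)/(m+1) = 1/(n+1) := by exact_mod_cast this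
      field_simp at h2
      exact_mod_cast add_right_cancel h2.symm
    · intro n
      refine ⟨(1/(n+1), 0), ⟨?_, by norm_num⟩, rfl⟩
      rw [abs_le]
      have hn : (0:ℚ) < n + 1 := by positivity
      constructor
      · have : (0:ℚ) ≤ 1/(n+1) := by positivity
        linarith
      · rw [div_le_one hn]; linarith
  · -- bounded
    apply Bornology.IsBounded.subset (Metric.isBounded_closedBall (x := 0) (r := 2))
    rintro x ⟨q, ⟨h1, h2⟩, rfl⟩
    simp only [Metric.mem_closedBall, dist_zero_right]
    rw [EuclideanSpace.norm_eq]
    rw [show (Finset.univ : Finset (Fin 2)) = {0, 1} by decide]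
    rw [Finset.sum_insert (by decide), Finset.sum_singleton]
    rw [ratPt_apply0, ratPt_apply1]
    have h1' : |(q.1 : ℝ)| ≤ 1 := by exact_mod_cast h1
    have h2' : |(q.2 : ℝ)| ≤ 1 := by exact_mod_cast h2
    calc Real.sqrt (|(q.1:ℝ)|^2 + |(q.2:ℝ)|^2) ≤ Real.sqrt (1 + 1) := by
          apply Real.sqrt_le_sqrt
          nlinarith [abs_nonneg (q.1:ℝ), abs_nonneg (q.2:ℝ)]
      _ ≤ 2 := by
          rw [show (1:ℝ)+1 = 2 by norm_num]
          nlinarith [Real.sq_sqrt (by norm_num : (2:ℝ) ≥ 0), Real.sqrt_nonneg 2]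
  · -- not collinear
    intro hcol
    have h0 : ratPt (0,0) ∈ ratPt '' ratSq := ⟨(0,0), ⟨by norm_num, by norm_num⟩, rfl⟩
    have h1 : ratPt (1,0) ∈ ratPt '' ratSq := ⟨(1,0), ⟨by norm_num, by norm_num⟩, rfl⟩
    have h2 : ratPt (0,1) ∈ ratPt '' ratSq := ⟨(0,1), ⟨by norm_num, by norm_num⟩, rfl⟩
    rw [collinear_iff_of_mem h0] at hcol
    obtain ⟨v, hv⟩ := hcol
    obtain ⟨s, hs⟩ := hv _ h1
    obtain ⟨t, ht⟩ := hv _ h2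
    have hs0 := congrArg (fun x => x 0) hs
    have hs1 := congrArg (fun x => x 1) hs
    have ht0 := congrArg (fun x => x 0) ht
    have ht1 := congrArg (fun x => x 1) ht
    simp only [vadd_eq_add, ratPt_apply0, ratPt_apply1, PiLp.add_apply, PiLp.smul_apply,
      smul_eq_mul] at hs0 hs1 ht0 ht1
    norm_num [ratPt_apply0, ratPt_apply1] at hs0 hs1 ht0 ht1
    rcases hs1 with h | h
    · rw [h] at hs0; norm_num at hs0
    · rw [h] at ht1; norm_num at ht1
  · -- no line meets in exactly two points
    rintro L hL ⟨p, q, hpq, hset⟩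
    have hp : p ∈ (L : Set _) ∩ (ratPt '' ratSq) := by rw [hset]; left; rfl
    have hq : q ∈ (L : Set _) ∩ (ratPt '' ratSq) := by rw [hset]; right; rfl
    obtain ⟨hpL, a, ha, hap⟩ := hp
    obtain ⟨hqL, b, hb, hbq⟩ := hq
    set m := midpoint ℝ p q with hm
    have hmL : m ∈ L := by
      rw [hm, midpoint]
      exact AffineMap.lineMap_mem _ hpL hqL
    have hmS : m ∈ ratPt '' ratSq := by
      refine ⟨((a.1+b.1)/2, (a.2+b.2)/2), ⟨?_, ?_⟩, ?_⟩
      · calc |(a.1+b.1)/2| ≤ (|a.1| + |b.1|)/2 := by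
              rw [abs_div]; simp only [abs_two]
              gcongr; exact abs_add_le _ _
          _ ≤ 1 := by rcases ha with ⟨ha1, _⟩; rcases hb with ⟨hb1, _⟩; linarith
      · calc |(a.2+b.2)/2| ≤ (|a.2| + |b.2|)/2 := by
              rw [abs_div]; simp only [abs_two]
              gcongr; exact abs_add_le _ _
          _ ≤ 1 := by rcases ha with ⟨_, ha2⟩; rcases hb with ⟨_, hb2⟩; linarith
      · rw [hm, ← hap, ← hbq]
        ext i
        fin_cases i <;>
          simp [midpoint_eq_smul_add, ratPt_apply0, ratPt_apply1, PiLp.add_apply, PiLp.smul_apply] <;>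
          ring
    have : m ∈ ({p, q} : Set _) := hset ▸ ⟨hmL, hmS⟩
    rcases this with h | h
    · exact hpq ((midpoint_eq_left_iff (R := ℝ)).mp h)
    · exact hpq ((midpoint_eq_right_iff (R := ℝ)).mp h)
end

section
/- Let F be a finite family of closed nondegenerate line-segments in ℝ² with pairwise disjoint relative interiors (i.e. the open segments are pairwise disjoint). Suppose ⋃F is not collinear and no affine line meets ⋃F in exactly two points. Then for every extreme point a of the convex hull of ⋃F (i.e. every vertex of conv(⋃F)), there exist three distinct segments in F each having a as an endpoint. -/
local notation "V2" => EuclideanSpace ℝ (Fin 2)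

lemma ker_finrank_one (h : V2 →L[ℝ] ℝ) (z : V2) (hz : h z ≠ 0) :
    Module.finrank ℝ (LinearMap.ker (h : V2 →ₗ[ℝ] ℝ)) = 1 := by
  have hrn := (h : V2 →ₗ[ℝ] ℝ).finrank_range_add_finrank_ker
  have hdim : Module.finrank ℝ V2 = 2 := by simp
  have hrange : LinearMap.range (h : V2 →ₗ[ℝ] ℝ) = ⊤ := by
    rw [LinearMap.range_eq_top]
    intro r
    refine ⟨(r / h z) • z, ?_⟩
    simp only [LinearMap.map_smul, ContinuousLinearMap.coe_coe, smul_eq_mul]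
    field_simp
  rw [hrange, hdim] at hrn
  simp only [finrank_top] at hrn
  have : Module.finrank ℝ ℝ = 1 := Module.finrank_self ℝ
  omega

lemma ker_eq_span (h : V2 →L[ℝ] ℝ) (z : V2) (hz : h z ≠ 0) (w : V2) (hw : h w = 0)
    (hwne : w ≠ 0) : LinearMap.ker (h : V2 →ₗ[ℝ] ℝ) = Submodule.span ℝ {w} := by
  refine (Submodule.eq_of_le_of_finrank_le ?_ ?_).symm
  · rw [Submodule.span_singleton_le_iff_mem]; exact LinearMap.mem_ker.2 (by simpa using hw)
  · rw [ker_finrank_one h z hz, finrank_span_singleton hwne]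

lemma mem_levelLine (h : V2 →L[ℝ] ℝ) (p x : V2) :
    x ∈ AffineSubspace.mk' p (LinearMap.ker (h : V2 →ₗ[ℝ] ℝ)) ↔ h x = h p := by
  rw [AffineSubspace.mem_mk']
  simp only [vsub_eq_sub, LinearMap.mem_ker, ContinuousLinearMap.coe_coe, map_sub, sub_eq_zero]

lemma isLine_levelLine (h : V2 →L[ℝ] ℝ) (z : V2) (hz : h z ≠ 0) (p : V2) :
    IsLine (AffineSubspace.mk' p (LinearMap.ker (h : V2 →ₗ[ℝ] ℝ))) := by
  unfold IsLine
  rw [AffineSubspace.direction_mk']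
  exact ker_finrank_one h z hz

lemma collinear_of_level (h : V2 →L[ℝ] ℝ) (z : V2) (hz : h z ≠ 0) (S : Set V2)
    (hS : ∀ x ∈ S, ∀ y ∈ S, h x = h y) : Collinear ℝ S := by
  rcases S.eq_empty_or_nonempty with rfl | ⟨p₀, hp₀⟩
  · exact collinear_empty ℝ _
  rw [collinear_iff_of_mem hp₀]
  obtain ⟨w, hwker, hwne⟩ := Submodule.exists_mem_ne_zero_of_ne_bot (p := LinearMap.ker (h : V2 →ₗ[ℝ] ℝ))
    (by intro hbot
        have h1 := ker_finrank_one h z hz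
        rw [hbot] at h1
        simp at h1)
  refine ⟨w, fun p hp => ?_⟩
  have hmem : p - p₀ ∈ LinearMap.ker (h : V2 →ₗ[ℝ] ℝ) := by
    simp only [LinearMap.mem_ker, ContinuousLinearMap.coe_coe, map_sub, sub_eq_zero]
    exact hS p hp p₀ hp₀
  rw [ker_eq_span h z hz w (by simpa using hwker) hwne, Submodule.mem_span_singleton] at hmem
  obtain ⟨r, hr⟩ := hmem
  exact ⟨r, by rw [vadd_eq_add, hr]; abel⟩

lemma inj_of_pair (f g : V2 →L[ℝ] ℝ) (z : V2) (hz : f z ≠ 0) (w : V2) (hfw : f w = 0)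
    (hgw : g w ≠ 0) (x y : V2) (hf : f x = f y) (hg : g x = g y) : x = y := by
  have hwne : w ≠ 0 := fun hw => hgw (by rw [hw, map_zero])
  have hmem : x - y ∈ LinearMap.ker (f : V2 →ₗ[ℝ] ℝ) := by
    simp only [LinearMap.mem_ker, ContinuousLinearMap.coe_coe, map_sub, sub_eq_zero]
    exact hf
  rw [ker_eq_span f z hz w hfw hwne, Submodule.mem_span_singleton] at hmem
  obtain ⟨r, hr⟩ := hmem
  have : g (x - y) = r * g w := by rw [← hr]; simp
  rw [map_sub, hg, sub_self] at this
  have hr0 : r = 0 := by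
    rcases mul_eq_zero.1 this.symm with h | h
    · exact h
    · exact absurd h hgw
  rw [hr0, zero_smul] at hr
  have := sub_eq_zero.1 hr.symm
  exact this

set_option maxHeartbeats 1000000 in
lemma core
    (F : Finset (V2 × V2)) (hnd : ∀ s ∈ F, s.1 ≠ s.2)
    (hline : ∀ L : AffineSubspace ℝ (EuclideanSpace ℝ (Fin 2)), IsLine L →
      ¬ ∃ p q, p ≠ q ∧
        (L : Set (EuclideanSpace ℝ (Fin 2))) ∩ (⋃ s ∈ F, segment ℝ s.1 s.2) = {p, q})
    (f g : V2 →L[ℝ] ℝ) (w : V2) (hfw : f w = 0) (hgw : g w ≠ 0)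
    (hinj : ∀ x y : V2, f x = f y → g x = g y → x = y)
    (a b : V2) (s : V2 × V2) (hs : s ∈ F)
    (hseg : segment ℝ s.1 s.2 = segment ℝ a b)
    (hfb : f b < f a)
    (hfP : ∀ t ∈ F, t ≠ s → f t.1 < f a ∧ f t.2 < f a)
    (Hgt : ∃ t ∈ F, t ≠ s ∧ ((g b - g a) * (f a - f t.1) < (g t.1 - g a) * (f a - f b) ∨
        (g b - g a) * (f a - f t.2) < (g t.2 - g a) * (f a - f b))) :
    False := by
  classical
  obtain ⟨S, hSdef⟩ : ∃ S : Set V2, S = ⋃ t ∈ F, segment ℝ t.1 t.2 := ⟨_, rfl⟩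
  rw [show (⋃ s ∈ F, segment ℝ s.1 s.2) = S from hSdef.symm] at hline
  obtain ⟨U, hU⟩ : ∃ U : V2 → ℝ, U = fun x => f a - f x := ⟨_, rfl⟩
  obtain ⟨Vv, hV⟩ : ∃ Vv : V2 → ℝ, Vv = fun x => g x - g a := ⟨_, rfl⟩
  obtain ⟨P, hP⟩ : ∃ P : Finset V2,
      P = (F.erase s).image Prod.fst ∪ (F.erase s).image Prod.snd := ⟨_, rfl⟩
  have hPmem : ∀ x ∈ P, ∃ t ∈ F, t ≠ s ∧ (t.1 = x ∨ t.2 = x) := by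
    intro x hx
    rw [hP] at hx
    rcases Finset.mem_union.1 hx with h | h <;>
      obtain ⟨t, ht, rfl⟩ := Finset.mem_image.1 h <;>
      obtain ⟨htne, htF⟩ := Finset.mem_erase.1 ht
    · exact ⟨t, htF, htne, Or.inl rfl⟩
    · exact ⟨t, htF, htne, Or.inr rfl⟩
  have hmemP : ∀ t ∈ F, t ≠ s → t.1 ∈ P ∧ t.2 ∈ P := by
    intro t htF htne
    rw [hP]
    constructor
    · exact Finset.mem_union_left _ (Finset.mem_image.2 ⟨t, Finset.mem_erase.2 ⟨htne, htF⟩, rfl⟩)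
    · exact Finset.mem_union_right _ (Finset.mem_image.2 ⟨t, Finset.mem_erase.2 ⟨htne, htF⟩, rfl⟩)
  have hUP : ∀ x ∈ P, 0 < U x := by
    intro x hx
    obtain ⟨t, htF, htne, hxe⟩ := hPmem x hx
    have h2 := hfP t htF htne
    rw [hU]
    rcases hxe with rfl | rfl
    · simpa using sub_pos.2 h2.1
    · simpa using sub_pos.2 h2.2
  have hUb : 0 < U b := by rw [hU]; simpa using sub_pos.2 hfb
  obtain ⟨t₀, ht₀F, ht₀ne, hcross⟩ := Hgt
  have hPne : P.Nonempty := ⟨t₀.1, (hmemP t₀ ht₀F ht₀ne).1⟩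
  obtain ⟨φ, hφ⟩ : ∃ φ : V2 → ℝ, φ = fun x => Vv x / U x := ⟨_, rfl⟩
  obtain ⟨m, hm⟩ : ∃ m : ℝ, m = P.sup' hPne φ := ⟨_, rfl⟩
  have hφle : ∀ x ∈ P, Vv x ≤ m * U x := by
    intro x hx
    have h1 : φ x ≤ m := hm ▸ Finset.le_sup' φ hx
    rw [hφ] at h1
    simp only at h1
    rw [div_le_iff₀ (hUP x hx)] at h1
    linarith
  have hms : Vv b < m * U b := by
    have hx₀ : ∃ x ∈ P, Vv b * U x < Vv x * U b := by
      rcases hcross with h | h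
      · exact ⟨t₀.1, (hmemP t₀ ht₀F ht₀ne).1, by rw [hU, hV]; simpa using h⟩
      · exact ⟨t₀.2, (hmemP t₀ ht₀F ht₀ne).2, by rw [hU, hV]; simpa using h⟩
    obtain ⟨x, hxP, hlt⟩ := hx₀
    have h1 := hφle x hxP
    have h2 := hUP x hxP
    nlinarith
  obtain ⟨Q, hQ⟩ : ∃ Q : Finset V2, Q = P.filter (fun x => Vv x = m * U x) := ⟨_, rfl⟩
  have hQne : Q.Nonempty := by
    obtain ⟨x, hxP, hxe⟩ := Finset.exists_mem_eq_sup' hPne φ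
    refine ⟨x, ?_⟩
    rw [hQ, Finset.mem_filter]
    refine ⟨hxP, ?_⟩
    have h1 : φ x = m := by rw [hm]; exact hxe.symm
    rw [hφ] at h1
    simp only at h1
    rw [div_eq_iff (ne_of_gt (hUP x hxP))] at h1
    linarith
  obtain ⟨q, hqQ, hqmin⟩ := Finset.exists_min_image Q U hQne
  have hqP : q ∈ P := by rw [hQ] at hqQ; exact (Finset.mem_filter.1 hqQ).1
  have hqeq : Vv q = m * U q := by rw [hQ] at hqQ; exact (Finset.mem_filter.1 hqQ).2
  have huq : 0 < U q := hUP q hqP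
  obtain ⟨P', hP'⟩ : ∃ P' : Finset V2, P' = insert b P := ⟨_, rfl⟩
  have hUP' : ∀ x ∈ P', 0 < U x := by
    intro x hx
    rw [hP'] at hx
    rcases Finset.mem_insert.1 hx with rfl | h
    · exact hUb
    · exact hUP x h
  have hbP' : b ∈ P' := by rw [hP']; exact Finset.mem_insert_self _ _
  have hPP' : ∀ x ∈ P, x ∈ P' := by intro x hx; rw [hP']; exact Finset.mem_insert_of_mem hx
  obtain ⟨δ, hδ⟩ : ∃ δ : V2 → ℝ,
      δ = fun x => if Vv x < m * U x then m * U x - Vv x else 1 := ⟨_, rfl⟩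
  have hP'ne : P'.Nonempty := ⟨b, hbP'⟩
  obtain ⟨dm, hdm⟩ : ∃ dm : ℝ, dm = P'.inf' hP'ne δ := ⟨_, rfl⟩
  have hdmpos : 0 < dm := by
    rw [hdm, Finset.lt_inf'_iff]
    intro x hx
    rw [hδ]
    by_cases hc : Vv x < m * U x
    · simp only [if_pos hc]; linarith
    · simp only [if_neg hc]; norm_num
  have hdmle : ∀ x ∈ P', Vv x < m * U x → dm ≤ m * U x - Vv x := by
    intro x hx hc
    have h1 : dm ≤ δ x := hdm ▸ Finset.inf'_le δ hx
    rw [hδ] at h1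
    simpa [if_pos hc] using h1
  obtain ⟨ε, hε⟩ : ∃ ε : ℝ, ε = dm / (2 * U q) := ⟨_, rfl⟩
  have hεpos : 0 < ε := by rw [hε]; exact div_pos hdmpos (by linarith)
  have hεUq : ε * U q = dm / 2 := by
    rw [hε]; field_simp
  obtain ⟨r, hr⟩ : ∃ r : V2 → ℝ,
      r = fun x => (Vv x - m * U x) + ε * (U q - U x) := ⟨_, rfl⟩
  have hrP'neg : ∀ x ∈ P', Vv x < m * U x → r x < 0 := by
    intro x hx hlt
    have h1 : dm ≤ m * U x - Vv x := hdmle x hx hlt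
    have h3 : 0 < U x := hUP' x hx
    have h4 : ε * (U q - U x) ≤ ε * U q := by nlinarith
    rw [hr]
    simp only
    linarith
  have hrq : r q = 0 := by
    rw [hr]; simp only; rw [hqeq]; ring
  have hrP : ∀ x ∈ P, x ≠ q → r x < 0 := by
    intro x hxP hxq
    rcases lt_or_eq_of_le (hφle x hxP) with hlt | heq
    · exact hrP'neg x (hPP' x hxP) hlt
    · have hxQ : x ∈ Q := by rw [hQ, Finset.mem_filter]; exact ⟨hxP, heq⟩
      have hUge : U q ≤ U x := hqmin x hxQ
      rcases lt_or_eq_of_le hUge with hlt2 | heq2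
      · rw [hr]; simp only; rw [← heq]; nlinarith
      · exfalso; apply hxq
        have hfx : f x = f q := by
          have h6 : U x = U q := heq2.symm
          rw [hU] at h6; simp only at h6; linarith
        have hgx : g x = g q := by
          have h7 : Vv x = Vv q := by rw [heq, hqeq, heq2]
          rw [hV] at h7; simp only at h7; linarith
        exact hinj x q hfx hgx
  have hrb : r b < 0 := hrP'neg b hbP' hms
  have hra : r a = ε * U q := by
    rw [hr]; simp only; rw [hU, hV]; simp only; ring
  have hrapos : 0 < r a := by rw [hra]; positivity
  obtain ⟨H, hH⟩ : ∃ H : V2 →L[ℝ] ℝ, H = g + (m + ε) • f := ⟨_, rfl⟩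
  have hHap : ∀ x : V2, H x = g x + (m + ε) * f x := by
    intro x; rw [hH]; simp
  have hHr : ∀ x, r x = H x - H q := by
    intro x
    have hq' : g q - g a = m * (f a - f q) := by
      have h8 := hqeq; rw [hU, hV] at h8; simp only at h8; linarith
    rw [hr]; simp only; rw [hHap x, hHap q, hU, hV]; simp only
    linear_combination hq'
  have hHw : H w ≠ 0 := by
    rw [hHap w, hfw]; simpa using hgw
  obtain ⟨L, hL⟩ : ∃ L : AffineSubspace ℝ (EuclideanSpace ℝ (Fin 2)),
      L = AffineSubspace.mk' q (LinearMap.ker (H : V2 →ₗ[ℝ] ℝ)) := ⟨_, rfl⟩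
  have hLmem : ∀ x, x ∈ L ↔ r x = 0 := by
    intro x
    rw [hL, mem_levelLine H q x, ← sub_eq_zero, ← hHr x]
  have haff : ∀ (c d : ℝ) (x y : V2), c + d = 1 → r (c • x + d • y) = c * r x + d * r y := by
    intro c d x y hab
    have h1 : H (c • x + d • y) = c * H x + d * H y := by
      rw [map_add, map_smul, map_smul, smul_eq_mul, smul_eq_mul]
    rw [hHr, hHr x, hHr y, h1]
    linear_combination hab * H q
  have hrarb : 0 < r a - r b := by linarith
  obtain ⟨β, hβ⟩ : ∃ β : ℝ, β = r a / (r a - r b) := ⟨_, rfl⟩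
  obtain ⟨α, hα⟩ : ∃ α : ℝ, α = 1 - β := ⟨_, rfl⟩
  have hβpos : 0 < β := by rw [hβ]; exact div_pos hrapos hrarb
  have hβlt : β < 1 := by
    rw [hβ, div_lt_one hrarb]; linarith
  have hαpos : 0 < α := by rw [hα]; linarith
  have habsum : α + β = 1 := by rw [hα]; ring
  have hβra : β * (r a - r b) = r a := by
    rw [hβ]; field_simp
  obtain ⟨p, hpdef⟩ : ∃ p : V2, p = α • a + β • b := ⟨_, rfl⟩
  have hrp : r p = 0 := by
    rw [hpdef, haff α β a b habsum]
    linear_combination r a * hα - hβra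
  have hpab : p ∈ segment ℝ a b := ⟨α, β, hαpos.le, hβpos.le, habsum, hpdef.symm⟩
  have hpS : p ∈ S := by
    rw [hSdef]
    exact Set.mem_biUnion hs (by rw [hseg]; exact hpab)
  have hqS : q ∈ S := by
    obtain ⟨t, htF, htne, hxe⟩ := hPmem q hqP
    rw [hSdef]
    refine Set.mem_biUnion htF ?_
    rcases hxe with h | h
    · rw [← h]; exact left_mem_segment ℝ _ _
    · rw [← h]; exact right_mem_segment ℝ _ _
  have hfp : f p = α * f a + β * f b := by
    rw [hpdef, map_add, map_smul, map_smul, smul_eq_mul, smul_eq_mul]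
  have hgp : g p = α * g a + β * g b := by
    rw [hpdef, map_add, map_smul, map_smul, smul_eq_mul, smul_eq_mul]
  have hpq : p ≠ q := by
    intro hpe
    have hUp : U p = β * U b := by
      rw [hU]; simp only; rw [hfp, hα]; ring
    have hVp : Vv p = β * Vv b := by
      rw [hV]; simp only; rw [hgp, hα]; ring
    have h1 : Vv p = m * U p := by rw [hpe]; exact hqeq
    rw [hUp, hVp] at h1
    have h2 : Vv b = m * U b := by
      have hβne : β ≠ 0 := ne_of_gt hβpos
      have := mul_left_cancel₀ hβne (by linarith [h1] : β * Vv b = β * (m * U b))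
      exact this
    linarith
  have hset : (L : Set V2) ∩ S = {p, q} := by
    ext x
    simp only [Set.mem_inter_iff, Set.mem_insert_iff, Set.mem_singleton_iff,
      SetLike.mem_coe, hLmem]
    constructor
    · rintro ⟨hrx, hxS⟩
      rw [hSdef] at hxS
      simp only [Set.mem_iUnion, exists_prop] at hxS
      obtain ⟨t, htF, hxseg⟩ := hxS
      by_cases hts : t = s
      · rw [hts, hseg] at hxseg
        obtain ⟨α', β', hα', hβ', hsum', hxe⟩ := hxseg
        left
        have h1 : α' * r a + β' * r b = 0 := by
          rw [← haff α' β' a b hsum', hxe, hrx]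
        have hβeq : β' = β := by
          have h3 : β' * (r a - r b) = r a := by linear_combination r a * hsum' - h1
          exact mul_right_cancel₀ (ne_of_gt hrarb) (h3.trans hβra.symm)
        have hαeq : α' = α := by rw [hα, ← hβeq]; linarith
        rw [← hxe, hαeq, hβeq, hpdef]
      · right
        have hP1 : t.1 ∈ P := (hmemP t htF hts).1
        have hP2 : t.2 ∈ P := (hmemP t htF hts).2
        obtain ⟨α', β', hα', hβ', hsum', hxe⟩ := hxseg
        have h1 : α' * r t.1 + β' * r t.2 = 0 := by
          rw [← haff α' β' t.1 t.2 hsum', hxe, hrx]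
        have hr1 : r t.1 ≤ 0 := by
          by_cases h : t.1 = q
          · rw [h, hrq]
          · exact (hrP t.1 hP1 h).le
        have hr2 : r t.2 ≤ 0 := by
          by_cases h : t.2 = q
          · rw [h, hrq]
          · exact (hrP t.2 hP2 h).le
        have hterm1 : α' * r t.1 = 0 := by nlinarith
        have hterm2 : β' * r t.2 = 0 := by nlinarith
        rcases mul_eq_zero.1 hterm1 with hα0 | hrt1
        · have hβ1 : β' = 1 := by linarith
          have hxt2 : x = t.2 := by rw [← hxe, hα0, hβ1]; simp
          have hrt2 : r t.2 = 0 := by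
            rw [hβ1] at hterm2; linarith
          have ht2q : t.2 = q := by
            by_contra h
            exact absurd hrt2 (ne_of_lt (hrP t.2 hP2 h))
          rw [hxt2, ht2q]
        · have ht1q : t.1 = q := by
            by_contra h
            exact absurd hrt1 (ne_of_lt (hrP t.1 hP1 h))
          rcases mul_eq_zero.1 hterm2 with hβ0 | hrt2
          · have hα1 : α' = 1 := by linarith
            have hxt1 : x = t.1 := by rw [← hxe, hβ0, hα1]; simp
            rw [hxt1, ht1q]
          · have ht2q : t.2 = q := by
              by_contra h
              exact absurd hrt2 (ne_of_lt (hrP t.2 hP2 h))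
            exact absurd (ht1q.trans ht2q.symm) (hnd t htF)
    · rintro (rfl | rfl)
      · exact ⟨hrp, hpS⟩
      · exact ⟨hrq, hqS⟩
  refine hline L ?_ ⟨p, q, hpq, hset⟩
  rw [hL]
  exact isLine_levelLine H w hHw q

set_option maxHeartbeats 1000000 in
theorem three_segments_at_each_vertex
    (F : Finset (EuclideanSpace ℝ (Fin 2) × EuclideanSpace ℝ (Fin 2)))
    (hnd : ∀ s ∈ F, s.1 ≠ s.2)
    (hdisj : (F : Set (EuclideanSpace ℝ (Fin 2) × EuclideanSpace ℝ (Fin 2))).Pairwise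
      fun s t => Disjoint (openSegment ℝ s.1 s.2) (openSegment ℝ t.1 t.2))
    (hncol : ¬ Collinear ℝ (⋃ s ∈ F, segment ℝ s.1 s.2))
    (hline : ∀ L : AffineSubspace ℝ (EuclideanSpace ℝ (Fin 2)), IsLine L →
      ¬ ∃ p q, p ≠ q ∧
        (L : Set (EuclideanSpace ℝ (Fin 2))) ∩ (⋃ s ∈ F, segment ℝ s.1 s.2) = {p, q}) :
    ∀ a ∈ Set.extremePoints ℝ (convexHull ℝ (⋃ s ∈ F, segment ℝ s.1 s.2)),
      ∃ s₁ ∈ F, ∃ s₂ ∈ F, ∃ s₃ ∈ F, s₁ ≠ s₂ ∧ s₁ ≠ s₃ ∧ s₂ ≠ s₃ ∧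
        (s₁.1 = a ∨ s₁.2 = a) ∧ (s₂.1 = a ∨ s₂.2 = a) ∧ (s₃.1 = a ∨ s₃.2 = a) := by
  classical
  intro a ha
  obtain ⟨T, hT⟩ : ∃ T : Finset V2, T = F.image Prod.fst ∪ F.image Prod.snd := ⟨_, rfl⟩
  have hTmem : ∀ x : V2, x ∈ T ↔ ∃ t ∈ F, t.1 = x ∨ t.2 = x := by
    intro x
    rw [hT]
    constructor
    · intro hx
      rcases Finset.mem_union.1 hx with h | h <;> obtain ⟨t, ht, rfl⟩ := Finset.mem_image.1 h
      · exact ⟨t, ht, Or.inl rfl⟩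
      · exact ⟨t, ht, Or.inr rfl⟩
    · rintro ⟨t, htF, rfl | rfl⟩
      · exact Finset.mem_union_left _ (Finset.mem_image.2 ⟨t, htF, rfl⟩)
      · exact Finset.mem_union_right _ (Finset.mem_image.2 ⟨t, htF, rfl⟩)
  have hsegsub : ∀ t ∈ F, segment ℝ t.1 t.2 ⊆ convexHull ℝ (T : Set V2) := by
    intro t htF
    rw [← convexHull_pair]
    apply convexHull_mono
    intro y hy
    simp only [Set.mem_insert_iff, Set.mem_singleton_iff] at hy
    rcases hy with rfl | rfl
    · exact (hTmem t.1).2 ⟨t, htF, Or.inl rfl⟩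
    · exact (hTmem t.2).2 ⟨t, htF, Or.inr rfl⟩
  have hhull : convexHull ℝ (⋃ s ∈ F, segment ℝ s.1 s.2) = convexHull ℝ (T : Set V2) := by
    apply subset_antisymm
    · refine convexHull_min ?_ (convex_convexHull ℝ _)
      intro x hx
      simp only [Set.mem_iUnion, exists_prop] at hx
      obtain ⟨t, htF, hxseg⟩ := hx
      exact hsegsub t htF hxseg
    · apply convexHull_mono
      intro x hx
      obtain ⟨t, htF, hte⟩ := (hTmem x).1 hx
      refine Set.mem_biUnion htF ?_
      rcases hte with rfl | rfl
      · exact left_mem_segment ℝ _ _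
      · exact right_mem_segment ℝ _ _
  rw [hhull] at ha
  have haT : a ∈ T := extremePoints_convexHull_subset ha
  have hanot : a ∉ convexHull ℝ ((T.erase a : Finset V2) : Set V2) := by
    intro hmem
    have hsubhull : convexHull ℝ ((T.erase a : Finset V2) : Set V2) ⊆
        convexHull ℝ (T : Set V2) :=
      convexHull_mono (by intro y hy; simp only [Finset.coe_erase, Set.mem_diff] at hy
                          exact hy.1)
    have hext : a ∈ Set.extremePoints ℝ (convexHull ℝ ((T.erase a : Finset V2) : Set V2)) := by
      rw [mem_extremePoints] at ha ⊢
      exact ⟨hmem, fun x hx y hy hxy => ha.2 x (hsubhull hx) y (hsubhull hy) hxy⟩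
    have hsub := extremePoints_convexHull_subset hext
    simp at hsub
  have hclosed : IsClosed (convexHull ℝ ((T.erase a : Finset V2) : Set V2)) :=
    (Set.Finite.isCompact_convexHull (𝕜 := ℝ) (Finset.finite_toSet _)).isClosed
  obtain ⟨f, u₀, hfu, hua⟩ := geometric_hahn_banach_closed_point
    (convex_convexHull ℝ _) hclosed hanot
  have hfT : ∀ x ∈ T, x ≠ a → f x < u₀ := by
    intro x hx hne
    exact hfu x (subset_convexHull ℝ _ (by simp [Finset.mem_erase, hne, hx]))
  have hfa : ∀ x ∈ T, x ≠ a → f x < f a := fun x hx hne => (hfT x hx hne).trans hua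
  obtain ⟨Efin, hE⟩ : ∃ E : Finset (V2 × V2), E = F.filter (fun t => t.1 = a ∨ t.2 = a) :=
    ⟨_, rfl⟩
  have hEmem : ∀ t, t ∈ Efin ↔ t ∈ F ∧ (t.1 = a ∨ t.2 = a) := by
    intro t; rw [hE, Finset.mem_filter]
  have hEne : Efin.Nonempty := by
    obtain ⟨t, htF, hte⟩ := (hTmem a).1 haT
    exact ⟨t, (hEmem t).2 ⟨htF, by tauto⟩⟩
  by_cases h3 : 3 ≤ Efin.card
  · obtain ⟨s₁, hs₁⟩ := hEne
    obtain ⟨s₂, hs₂⟩ := Finset.card_pos.1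
      (by have := Finset.card_erase_of_mem hs₁; omega : 0 < (Efin.erase s₁).card)
    obtain ⟨s₃, hs₃⟩ := Finset.card_pos.1
      (by rw [Finset.card_erase_of_mem hs₂, Finset.card_erase_of_mem hs₁]; omega :
        0 < ((Efin.erase s₁).erase s₂).card)
    have hs₂' : s₂ ∈ Efin := Finset.mem_of_mem_erase hs₂
    have hs₃'' : s₃ ∈ Efin.erase s₁ := Finset.mem_of_mem_erase hs₃
    have hs₃' : s₃ ∈ Efin := Finset.mem_of_mem_erase hs₃''
    refine ⟨s₁, ((hEmem s₁).1 hs₁).1, s₂, ((hEmem s₂).1 hs₂').1, s₃, ((hEmem s₃).1 hs₃').1,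
      (Finset.ne_of_mem_erase hs₂).symm, (Finset.ne_of_mem_erase hs₃'').symm,
      (Finset.ne_of_mem_erase hs₃).symm,
      ((hEmem s₁).1 hs₁).2, ((hEmem s₂).1 hs₂').2, ((hEmem s₃).1 hs₃').2⟩
  · exfalso
    have hc : Efin.card = 1 ∨ Efin.card = 2 := by
      have := Finset.card_pos.2 hEne; omega
    rcases hc with hc | hc
    · -- exactly one segment at a
      obtain ⟨s, hsE⟩ := Finset.card_eq_one.1 hc
      have hsmem : s ∈ Efin := hsE ▸ Finset.mem_singleton_self s
      have hsF : s ∈ F := ((hEmem s).1 hsmem).1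
      have hsa : s.1 = a ∨ s.2 = a := ((hEmem s).1 hsmem).2
      obtain ⟨b, hbne, hseg, hbT, hends⟩ : ∃ b : V2, b ≠ a ∧
          segment ℝ s.1 s.2 = segment ℝ a b ∧ b ∈ T ∧
          ((s.1 = a ∧ s.2 = b) ∨ (s.1 = b ∧ s.2 = a)) := by
        rcases hsa with h | h
        · exact ⟨s.2, by rw [← h]; exact (hnd s hsF).symm, by rw [h],
            (hTmem s.2).2 ⟨s, hsF, Or.inr rfl⟩, Or.inl ⟨h, rfl⟩⟩
        · exact ⟨s.1, by rw [← h]; exact hnd s hsF, by rw [h, segment_symm],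
            (hTmem s.1).2 ⟨s, hsF, Or.inl rfl⟩, Or.inr ⟨rfl, h⟩⟩
      have hfb : f b < f a := hfa b hbT hbne
      have honly : ∀ t ∈ F, t ≠ s → f t.1 < f a ∧ f t.2 < f a := by
        intro t htF htne
        have htE : t ∉ Efin := by rw [hsE]; simpa using htne
        have hta : t.1 ≠ a ∧ t.2 ≠ a := by
          by_contra hcon
          push_neg at hcon
          apply htE
          refine (hEmem t).2 ⟨htF, ?_⟩
          by_cases h1 : t.1 = a
          · exact Or.inl h1
          · exact Or.inr (hcon h1)
        exact ⟨hfa t.1 ((hTmem t.1).2 ⟨t, htF, Or.inl rfl⟩) hta.1,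
          hfa t.2 ((hTmem t.2).2 ⟨t, htF, Or.inr rfl⟩) hta.2⟩
      have hfzne : f (a - b) ≠ 0 := by
        rw [map_sub]
        exact sub_ne_zero.2 (ne_of_lt hfb).symm
      obtain ⟨w, hwker, hwne⟩ := Submodule.exists_mem_ne_zero_of_ne_bot
        (p := LinearMap.ker (f : V2 →ₗ[ℝ] ℝ))
        (by intro hbot
            have h1 := ker_finrank_one f (a - b) hfzne
            rw [hbot] at h1
            simp at h1)
      have hfw : f w = 0 := by simpa using hwker
      obtain ⟨g, hg⟩ : ∃ g : V2 →L[ℝ] ℝ, g = innerSL ℝ w := ⟨_, rfl⟩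
      have hgw : g w ≠ 0 := by
        rw [hg]
        intro hzero
        rw [innerSL_apply_apply] at hzero
        exact hwne (inner_self_eq_zero.1 hzero)
      have hinj : ∀ x y : V2, f x = f y → g x = g y → x = y :=
        fun x y h1 h2 => inj_of_pair f g (a - b) hfzne w hfw hgw x y h1 h2
      by_cases H1 : ∃ t ∈ F, t ≠ s ∧
          ((g b - g a) * (f a - f t.1) < (g t.1 - g a) * (f a - f b) ∨
           (g b - g a) * (f a - f t.2) < (g t.2 - g a) * (f a - f b))
      · exact core F hnd hline f g w hfw hgw hinj a b s hsF hseg hfb honly H1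
      by_cases H2 : ∃ t ∈ F, t ≠ s ∧
          (((-g) b - (-g) a) * (f a - f t.1) < ((-g) t.1 - (-g) a) * (f a - f b) ∨
           ((-g) b - (-g) a) * (f a - f t.2) < ((-g) t.2 - (-g) a) * (f a - f b))
      · have hgw' : (-g) w ≠ 0 := by simpa using hgw
        have hinj' : ∀ x y : V2, f x = f y → (-g) x = (-g) y → x = y := by
          intro x y h1 h2
          apply hinj x y h1
          have h3 : -(g x) = -(g y) := by simpa using h2
          exact neg_injective h3
        exact core F hnd hline f (-g) w hfw hgw' hinj' a b s hsF hseg hfb honly H2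
      · push_neg at H1 H2
        have hcross : ∀ x ∈ T, (g b - g a) * (f a - f x) = (g x - g a) * (f a - f b) := by
          intro x hx
          obtain ⟨t, htF, hte⟩ := (hTmem x).1 hx
          have hab : ∀ y : V2, (y = a ∨ y = b) →
              (g b - g a) * (f a - f y) = (g y - g a) * (f a - f b) := by
            rintro y (rfl | rfl) <;> ring
          by_cases hts : t = s
          · subst hts
            rcases hte with rfl | rfl
            · rcases hends with ⟨h1s, _⟩ | ⟨h1s, _⟩
              · exact hab _ (Or.inl h1s)
              · exact hab _ (Or.inr h1s)
            · rcases hends with ⟨_, h2s⟩ | ⟨_, h2s⟩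
              · exact hab _ (Or.inr h2s)
              · exact hab _ (Or.inl h2s)
          · have h1 := H1 t htF hts
            have h2 := H2 t htF hts
            simp only [ContinuousLinearMap.neg_apply] at h2
            rcases hte with rfl | rfl
            · nlinarith [h1.1, h2.1]
            · nlinarith [h1.2, h2.2]
        obtain ⟨K, hK⟩ : ∃ K : V2 →L[ℝ] ℝ, K = (g b - g a) • f + (f a - f b) • g := ⟨_, rfl⟩
        have hKap : ∀ x : V2, K x = (g b - g a) * f x + (f a - f b) * g x := by
          intro x; rw [hK]; simp
        have hKT : ∀ x ∈ T, K x = K a := by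
          intro x hx
          have h1 := hcross x hx
          rw [hKap, hKap]
          linear_combination -h1
        have hKw : K w ≠ 0 := by
          rw [hKap, hfw, mul_zero, zero_add]
          exact mul_ne_zero (by rw [map_sub] at hfzne; exact hfzne) hgw
        apply hncol
        refine collinear_of_level K w hKw _ ?_
        have hKS : ∀ x ∈ ⋃ t ∈ F, segment ℝ t.1 t.2, K x = K a := by
          intro x hx
          simp only [Set.mem_iUnion, exists_prop] at hx
          obtain ⟨t, htF, hxseg⟩ := hx
          obtain ⟨c, d, hc, hd, hcd, hxe⟩ := hxseg
          have hK1 : K t.1 = K a := hKT t.1 ((hTmem t.1).2 ⟨t, htF, Or.inl rfl⟩)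
          have hK2 : K t.2 = K a := hKT t.2 ((hTmem t.2).2 ⟨t, htF, Or.inr rfl⟩)
          have hlin : K x = c * K t.1 + d * K t.2 := by
            rw [← hxe, map_add, map_smul, map_smul, smul_eq_mul, smul_eq_mul]
          rw [hlin, hK1, hK2]
          linear_combination (K a) * hcd
        intro x hx y hy
        rw [hKS x hx, hKS y hy]
    · -- exactly two segments at a
      obtain ⟨s₁, s₂, hne12, hsE⟩ := Finset.card_eq_two.1 hc
      have hs₁mem : s₁ ∈ Efin := by rw [hsE]; simp
      have hs₂mem : s₂ ∈ Efin := by rw [hsE]; simp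
      have hs₁F : s₁ ∈ F := ((hEmem s₁).1 hs₁mem).1
      have hs₂F : s₂ ∈ F := ((hEmem s₂).1 hs₂mem).1
      have hgetb : ∀ sᵢ ∈ Efin, ∃ bᵢ : V2, bᵢ ≠ a ∧
          segment ℝ sᵢ.1 sᵢ.2 = segment ℝ a bᵢ ∧
          openSegment ℝ sᵢ.1 sᵢ.2 = openSegment ℝ a bᵢ ∧ bᵢ ∈ T := by
        intro sᵢ hmem
        have hF : sᵢ ∈ F := ((hEmem sᵢ).1 hmem).1
        rcases ((hEmem sᵢ).1 hmem).2 with h | h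
        · exact ⟨sᵢ.2, by rw [← h]; exact (hnd sᵢ hF).symm, by rw [h], by rw [h],
            (hTmem sᵢ.2).2 ⟨sᵢ, hF, Or.inr rfl⟩⟩
        · exact ⟨sᵢ.1, by rw [← h]; exact hnd sᵢ hF, by rw [h, segment_symm],
            by rw [h, openSegment_symm], (hTmem sᵢ.1).2 ⟨sᵢ, hF, Or.inl rfl⟩⟩
      obtain ⟨b₁, hb₁ne, hseg₁, hopen₁, hb₁T⟩ := hgetb s₁ hs₁mem
      obtain ⟨b₂, hb₂ne, hseg₂, hopen₂, hb₂T⟩ := hgetb s₂ hs₂mem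
      have hfb₁ : f b₁ < u₀ := hfT b₁ hb₁T hb₁ne
      have hfb₂ : f b₂ < u₀ := hfT b₂ hb₂T hb₂ne
      have hmkp : ∀ bᵢ : V2, f bᵢ < u₀ → ∃ p : V2,
          p ∈ openSegment ℝ a bᵢ ∧ f p = u₀ ∧
          (∀ x ∈ segment ℝ a bᵢ, f x = u₀ → x = p) := by
        intro bᵢ hfbᵢ
        have hden : 0 < f a - f bᵢ := by linarith
        obtain ⟨θ, hθ⟩ : ∃ θ : ℝ, θ = (u₀ - f bᵢ) / (f a - f bᵢ) := ⟨_, rfl⟩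
        have hθpos : 0 < θ := by rw [hθ]; exact div_pos (by linarith) hden
        have hθlt : θ < 1 := by rw [hθ, div_lt_one hden]; linarith
        have hθeq : θ * (f a - f bᵢ) = u₀ - f bᵢ := by
          rw [hθ]; field_simp
        refine ⟨θ • a + (1 - θ) • bᵢ, ⟨θ, 1 - θ, hθpos, by linarith, by ring, rfl⟩, ?_, ?_⟩
        · rw [map_add, map_smul, map_smul, smul_eq_mul, smul_eq_mul]
          linarith [hθeq]
        · rintro x ⟨c, d, hc, hd, hcd, hxe⟩ hfx
          rw [← hxe, map_add, map_smul, map_smul, smul_eq_mul, smul_eq_mul] at hfx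
          have hdec : d = 1 - c := by linarith
          rw [hdec] at hxe
          have hceq : c * (f a - f bᵢ) = u₀ - f bᵢ := by
            rw [hdec] at hfx; linarith [hfx]
          have hcθ : c = θ := by
            have := hceq.trans hθeq.symm
            exact mul_right_cancel₀ (ne_of_gt hden) this
          rw [← hxe, hcθ]
      obtain ⟨p₁, hp₁open, hp₁f, hp₁uniq⟩ := hmkp b₁ hfb₁
      obtain ⟨p₂, hp₂open, hp₂f, hp₂uniq⟩ := hmkp b₂ hfb₂
      have hp₁seg : p₁ ∈ segment ℝ a b₁ := openSegment_subset_segment ℝ _ _ hp₁open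
      have hp₂seg : p₂ ∈ segment ℝ a b₂ := openSegment_subset_segment ℝ _ _ hp₂open
      have hp12 : p₁ ≠ p₂ := by
        intro hpe
        have hd := hdisj (Finset.mem_coe.2 hs₁F) (Finset.mem_coe.2 hs₂F) hne12
        have hp₁o : p₁ ∈ openSegment ℝ s₁.1 s₁.2 := by rw [hopen₁]; exact hp₁open
        have hp₂o : p₁ ∈ openSegment ℝ s₂.1 s₂.2 := by rw [hopen₂, hpe]; exact hp₂open
        exact Set.disjoint_left.1 hd hp₁o hp₂o
      have hfane : f (a - b₁) ≠ 0 := by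
        rw [map_sub]
        have h9 := hfb₁.trans hua
        exact sub_ne_zero.2 (ne_of_lt h9).symm
      obtain ⟨L, hL⟩ : ∃ L : AffineSubspace ℝ (EuclideanSpace ℝ (Fin 2)),
          L = AffineSubspace.mk' p₁ (LinearMap.ker (f : V2 →ₗ[ℝ] ℝ)) := ⟨_, rfl⟩
      have hLmem : ∀ x : V2, x ∈ L ↔ f x = u₀ := by
        intro x
        rw [hL, mem_levelLine f p₁ x, hp₁f]
      have hset : (L : Set V2) ∩ (⋃ t ∈ F, segment ℝ t.1 t.2) = {p₁, p₂} := by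
        ext x
        simp only [Set.mem_inter_iff, Set.mem_insert_iff, Set.mem_singleton_iff,
          SetLike.mem_coe, hLmem]
        constructor
        · rintro ⟨hfx, hxS⟩
          simp only [Set.mem_iUnion, exists_prop] at hxS
          obtain ⟨t, htF, hxseg⟩ := hxS
          by_cases htE : t ∈ Efin
          · rw [hsE] at htE
            rcases Finset.mem_insert.1 htE with rfl | htE
            · left
              rw [hseg₁] at hxseg
              exact hp₁uniq x hxseg hfx
            · right
              rw [Finset.mem_singleton.1 htE, hseg₂] at hxseg
              exact hp₂uniq x hxseg hfx
          · exfalso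
            have hta : t.1 ≠ a ∧ t.2 ≠ a := by
              by_contra hcon
              push_neg at hcon
              apply htE
              refine (hEmem t).2 ⟨htF, ?_⟩
              by_cases h1 : t.1 = a
              · exact Or.inl h1
              · exact Or.inr (hcon h1)
            have hft1 : f t.1 < u₀ := hfT t.1 ((hTmem t.1).2 ⟨t, htF, Or.inl rfl⟩) hta.1
            have hft2 : f t.2 < u₀ := hfT t.2 ((hTmem t.2).2 ⟨t, htF, Or.inr rfl⟩) hta.2
            obtain ⟨c, d, hc, hd, hcd, hxe⟩ := hxseg
            rw [← hxe, map_add, map_smul, map_smul, smul_eq_mul, smul_eq_mul] at hfx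
            rcases eq_or_lt_of_le hc with hc0 | hcpos
            · have hd1 : d = 1 := by linarith
              rw [← hc0, hd1] at hfx
              simp at hfx
              linarith
            · have h5 : c * f t.1 < c * u₀ := mul_lt_mul_of_pos_left hft1 hcpos
              have h6 : d * f t.2 ≤ d * u₀ := mul_le_mul_of_nonneg_left hft2.le hd
              have h7 : c * u₀ + d * u₀ = u₀ := by linear_combination u₀ * hcd
              linarith
        · rintro (rfl | rfl)
          · exact ⟨hp₁f, Set.mem_biUnion hs₁F (by rw [hseg₁]; exact hp₁seg)⟩
          · exact ⟨hp₂f, Set.mem_biUnion hs₂F (by rw [hseg₂]; exact hp₂seg)⟩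
      refine hline L ?_ ⟨p₁, p₂, hp12, hset⟩
      rw [hL]
      exact isLine_levelLine f (a - b₁) hfane p₁
end

section
/- There exists a family F of exactly 6 closed nondegenerate line-segments in ℝ² with pairwise disjoint relative interiors (i.e. the open segments are pairwise disjoint) such that ⋃F is not collinear and no affine line meets ⋃F in exactly two points. -/
lemma step_pos (a b : ℝ) (ha : a < 0) :
    0 < -a / max b 1 ∧ ∀ t, 0 ≤ t → t ≤ -a / max b 1 → a + t * b ≤ 0 := by
  have hmax : (0:ℝ) < max b 1 := lt_of_lt_of_le one_pos (le_max_right b 1)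
  have hna : 0 < -a := by linarith
  constructor
  · exact div_pos hna hmax
  · intro t ht0 ht1
    have hb : b ≤ max b 1 := le_max_left b 1
    have h1 : t * b ≤ t * max b 1 := mul_le_mul_of_nonneg_left hb ht0
    have h2 : t * max b 1 ≤ (-a / max b 1) * max b 1 := mul_le_mul_of_nonneg_right ht1 (le_of_lt hmax)
    have h3 : (-a / max b 1) * max b 1 = -a := by field_simp
    linarith

lemma cross_pos (a1 b1 a2 b2 a3 b3 : ℝ) (h1 : a1 < 0) (h2 : a2 < 0) (h3 : a3 < 0)
    (hb : 0 < b1 ∨ 0 < b2 ∨ 0 < b3) :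
    ∃ t, 0 < t ∧ a1 + t*b1 ≤ 0 ∧ a2 + t*b2 ≤ 0 ∧ a3 + t*b3 ≤ 0 ∧
      (a1 + t*b1 = 0 ∨ a2 + t*b2 = 0 ∨ a3 + t*b3 = 0) := by
  classical
  set S : Set ℝ := {t | 0 ≤ t ∧ a1 + t*b1 ≤ 0 ∧ a2 + t*b2 ≤ 0 ∧ a3 + t*b3 ≤ 0} with hS
  have hS0 : (0:ℝ) ∈ S := by
    refine ⟨le_refl _, by linarith, by linarith, by linarith⟩
  have hclosed : IsClosed S := by
    have : S = {t | 0 ≤ t} ∩ ({t | a1 + t*b1 ≤ 0} ∩ ({t | a2 + t*b2 ≤ 0} ∩ {t | a3 + t*b3 ≤ 0})) := by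
      ext t; simp only [hS, Set.mem_setOf_eq, Set.mem_inter_iff]
    rw [this]
    refine IsClosed.inter ?_ (IsClosed.inter ?_ (IsClosed.inter ?_ ?_))
    · exact isClosed_le continuous_const continuous_id
    all_goals exact isClosed_le (by continuity) continuous_const
  have hbdd : BddAbove S := by
    rcases hb with hb | hb | hb
    · refine ⟨-a1/b1, fun t ht => ?_⟩
      have := ht.2.1
      rw [le_div_iff₀ hb] ; nlinarith
    · refine ⟨-a2/b2, fun t ht => ?_⟩
      have := ht.2.2.1
      rw [le_div_iff₀ hb] ; nlinarith
    · refine ⟨-a3/b3, fun t ht => ?_⟩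
      have := ht.2.2.2
      rw [le_div_iff₀ hb] ; nlinarith
  have hmem : sSup S ∈ S := hclosed.csSup_mem ⟨0, hS0⟩ hbdd
  set T := sSup S with hT
  obtain ⟨he1, he1'⟩ := step_pos a1 b1 h1
  obtain ⟨he2, he2'⟩ := step_pos a2 b2 h2
  obtain ⟨he3, he3'⟩ := step_pos a3 b3 h3
  set e : ℝ := min (-a1 / max b1 1) (min (-a2 / max b2 1) (-a3 / max b3 1)) with he
  have hepos : 0 < e := lt_min he1 (lt_min he2 he3)
  have heS : e ∈ S := by
    refine ⟨le_of_lt hepos, ?_, ?_, ?_⟩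
    · exact he1' e (le_of_lt hepos) (min_le_left _ _)
    · exact he2' e (le_of_lt hepos) (le_trans (min_le_right _ _) (min_le_left _ _))
    · exact he3' e (le_of_lt hepos) (le_trans (min_le_right _ _) (min_le_right _ _))
  have hTpos : 0 < T := lt_of_lt_of_le hepos (le_csSup hbdd heS)
  refine ⟨T, hTpos, hmem.2.1, hmem.2.2.1, hmem.2.2.2, ?_⟩
  by_contra hcon
  push_neg at hcon
  obtain ⟨hc1, hc2, hc3⟩ := hcon
  have hs1 : a1 + T*b1 < 0 := lt_of_le_of_ne hmem.2.1 hc1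
  have hs2 : a2 + T*b2 < 0 := lt_of_le_of_ne hmem.2.2.1 hc2
  have hs3 : a3 + T*b3 < 0 := lt_of_le_of_ne hmem.2.2.2 hc3
  obtain ⟨hf1, hf1'⟩ := step_pos (a1 + T*b1) b1 hs1
  obtain ⟨hf2, hf2'⟩ := step_pos (a2 + T*b2) b2 hs2
  obtain ⟨hf3, hf3'⟩ := step_pos (a3 + T*b3) b3 hs3
  set f : ℝ := min (-(a1 + T*b1) / max b1 1) (min (-(a2 + T*b2) / max b2 1) (-(a3 + T*b3) / max b3 1)) with hf
  have hfpos : 0 < f := lt_min hf1 (lt_min hf2 hf3)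
  have hfS : T + f ∈ S := by
    have k1 := hf1' f (le_of_lt hfpos) (min_le_left _ _)
    have k2 := hf2' f (le_of_lt hfpos) (le_trans (min_le_right _ _) (min_le_left _ _))
    have k3 := hf3' f (le_of_lt hfpos) (le_trans (min_le_right _ _) (min_le_right _ _))
    exact ⟨by linarith, by ring_nf; ring_nf at k1; linarith, by ring_nf; ring_nf at k2; linarith,
      by ring_nf; ring_nf at k3; linarith⟩
  have := le_csSup hbdd hfS
  linarith

lemma cross_neg (a1 b1 a2 b2 a3 b3 : ℝ) (h1 : a1 < 0) (h2 : a2 < 0) (h3 : a3 < 0)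
    (hb : b1 < 0 ∨ b2 < 0 ∨ b3 < 0) :
    ∃ t, t < 0 ∧ a1 + t*b1 ≤ 0 ∧ a2 + t*b2 ≤ 0 ∧ a3 + t*b3 ≤ 0 ∧
      (a1 + t*b1 = 0 ∨ a2 + t*b2 = 0 ∨ a3 + t*b3 = 0) := by
  have hb' : 0 < -b1 ∨ 0 < -b2 ∨ 0 < -b3 := by
    rcases hb with h|h|h
    · exact Or.inl (by linarith)
    · exact Or.inr (Or.inl (by linarith))
    · exact Or.inr (Or.inr (by linarith))
  obtain ⟨t, ht, k1, k2, k3, k4⟩ := cross_pos a1 (-b1) a2 (-b2) a3 (-b3) h1 h2 h3 hb'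
  refine ⟨-t, by linarith, by nlinarith, by nlinarith, by nlinarith, ?_⟩
  rcases k4 with k|k|k
  · exact Or.inl (by linarith)
  · exact Or.inr (Or.inl (by linarith))
  · exact Or.inr (Or.inr (by linarith))


abbrev E2 := EuclideanSpace ℝ (Fin 2)
noncomputable def pt (x y : ℝ) : E2 := (WithLp.equiv 2 _).symm ![x, y]

lemma mem_segment_of_coords (a b z : E2) (t : ℝ) (h0 : 0 ≤ t) (h1 : t ≤ 1)
    (hx : z 0 = (1-t) * a 0 + t * b 0) (hy : z 1 = (1-t) * a 1 + t * b 1) :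
    z ∈ segment ℝ a b := by
  refine ⟨1-t, t, by linarith, h0, by ring, ?_⟩
  ext i
  fin_cases i
  · exact hx.symm
  · exact hy.symm

lemma coords_of_mem_segment (a b z : E2) (h : z ∈ segment ℝ a b) :
    ∃ t, 0 ≤ t ∧ t ≤ 1 ∧ z 0 = (1-t) * a 0 + t * b 0 ∧ z 1 = (1-t) * a 1 + t * b 1 := by
  obtain ⟨u, v, hu, hv, huv, hz⟩ := h
  refine ⟨v, hv, by linarith, ?_, ?_⟩
  · have := congr_fun (congrArg WithLp.ofLp hz) 0
    have hu' : u = 1 - v := by linarith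
    rw [hu'] at this
    exact this.symm
  · have := congr_fun (congrArg WithLp.ofLp hz) 1
    have hu' : u = 1 - v := by linarith
    rw [hu'] at this
    exact this.symm

lemma coords_of_mem_openSegment (a b z : E2) (h : z ∈ openSegment ℝ a b) :
    ∃ t, 0 < t ∧ t < 1 ∧ z 0 = (1-t) * a 0 + t * b 0 ∧ z 1 = (1-t) * a 1 + t * b 1 := by
  obtain ⟨u, v, hu, hv, huv, hz⟩ := h
  refine ⟨v, hv, by linarith, ?_, ?_⟩
  · have := congr_fun (congrArg WithLp.ofLp hz) 0
    have hu' : u = 1 - v := by linarith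
    rw [hu'] at this
    exact this.symm
  · have := congr_fun (congrArg WithLp.ofLp hz) 1
    have hu' : u = 1 - v := by linarith
    rw [hu'] at this
    exact this.symm

noncomputable def pA : E2 := pt (-3) 0
noncomputable def pB : E2 := pt 3 0
noncomputable def pC : E2 := pt 0 3
noncomputable def pG : E2 := pt 0 1

lemma pA0 : pA 0 = -3 := rfl
lemma pA1 : pA 1 = 0 := rfl
lemma pB0 : pB 0 = 3 := rfl
lemma pB1 : pB 1 = 0 := rfl
lemma pC0 : pC 0 = 0 := rfl
lemma pC1 : pC 1 = 3 := rfl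
lemma pG0 : pG 0 = 0 := rfl
lemma pG1 : pG 1 = 1 := rfl

lemma ptne {a b : E2} (h : a 0 ≠ b 0 ∨ a 1 ≠ b 1) : a ≠ b := by
  intro hab; rcases h with h|h <;> exact h (by rw [hab])

lemma hAB : pA ≠ pB := ptne (Or.inl (by rw [pA0, pB0]; norm_num))
lemma hAC : pA ≠ pC := ptne (Or.inl (by rw [pA0, pC0]; norm_num))
lemma hAG : pA ≠ pG := ptne (Or.inl (by rw [pA0, pG0]; norm_num))
lemma hBC : pB ≠ pC := ptne (Or.inl (by rw [pB0, pC0]; norm_num))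
lemma hBG : pB ≠ pG := ptne (Or.inl (by rw [pB0, pG0]; norm_num))
lemma hCG : pC ≠ pG := ptne (Or.inr (by rw [pC1, pG1]; norm_num))
lemma hCA : pC ≠ pA := hAC.symm
lemma hGA : pG ≠ pA := hAG.symm
lemma hGB : pG ≠ pB := hBG.symm
lemma hGC : pG ≠ pC := hCG.symm
lemma hBA : pB ≠ pA := hAB.symm
lemma hCB : pC ≠ pB := hBC.symm

open Classical in
noncomputable def Fam : Finset (E2 × E2) :=
  {(pA, pB), (pB, pC), (pC, pA), (pA, pG), (pB, pG), (pC, pG)}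

lemma Fam_card : Fam.card = 6 := by
  classical
  rw [Fam]
  rw [Finset.card_insert_of_notMem, Finset.card_insert_of_notMem,
    Finset.card_insert_of_notMem, Finset.card_insert_of_notMem,
    Finset.card_insert_of_notMem, Finset.card_singleton]
  all_goals simp [Prod.ext_iff, hAB, hAC, hAG, hBC, hBG, hCG, hCA, hGA, hGB, hGC, hBA, hCB]

noncomputable def U : Set E2 := ⋃ s ∈ Fam, segment ℝ s.1 s.2

lemma memU_iff (z : E2) : z ∈ U ↔
    z ∈ segment ℝ pA pB ∨ z ∈ segment ℝ pB pC ∨ z ∈ segment ℝ pC pA ∨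
    z ∈ segment ℝ pA pG ∨ z ∈ segment ℝ pB pG ∨ z ∈ segment ℝ pC pG := by
  classical
  simp [U, Fam, Set.mem_iUnion]

lemma openSeg_disj (a b c d : E2)
    (h : ∀ u v : ℝ, 0 < u → u < 1 → 0 < v → v < 1 →
      ¬((1-u) * a 0 + u * b 0 = (1-v) * c 0 + v * d 0 ∧
        (1-u) * a 1 + u * b 1 = (1-v) * c 1 + v * d 1)) :
    Disjoint (openSegment ℝ a b) (openSegment ℝ c d) := by
  rw [Set.disjoint_left]
  intro z hz1 hz2
  obtain ⟨u, hu0, hu1, hx1, hy1⟩ := coords_of_mem_openSegment a b z hz1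
  obtain ⟨v, hv0, hv1, hx2, hy2⟩ := coords_of_mem_openSegment c d z hz2
  exact h u v hu0 hu1 hv0 hv1 ⟨hx1 ▸ hx2 ▸ rfl, hy1 ▸ hy2 ▸ rfl⟩

lemma pt_ext (a b : E2) (h0 : a 0 = b 0) (h1 : a 1 = b 1) : a = b := by
  ext i
  fin_cases i
  · exact h0
  · exact h1

lemma T_edge_mem (z : E2) (h1 : 0 ≤ z 1) (h2 : z 0 + z 1 ≤ 3) (h3 : z 1 - z 0 ≤ 3)
    (he : z 1 = 0 ∨ z 0 + z 1 = 3 ∨ z 1 - z 0 = 3) : z ∈ U := by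
  rcases he with h | h | h
  · exact (memU_iff z).mpr (Or.inl (mem_segment_of_coords pA pB z ((z 0 + 3)/6)
      (by linarith) (by linarith)
      (by rw [pA0, pB0]; ring) (by rw [pA1, pB1]; linarith)))
  · exact (memU_iff z).mpr (Or.inr (Or.inl (mem_segment_of_coords pB pC z (z 1 / 3)
      (by linarith) (by linarith)
      (by rw [pB0, pC0]; linarith) (by rw [pB1, pC1]; ring))))
  · exact (memU_iff z).mpr (Or.inr (Or.inr (Or.inl (mem_segment_of_coords pC pA z (-(z 0) / 3)
      (by linarith) (by linarith)
      (by rw [pC0, pA0]; ring) (by rw [pC1, pA1]; linarith)))))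

lemma R1_edge_mem (z : E2) (h1 : 0 ≤ z 1) (h2 : -3 ≤ z 0 - 3 * z 1) (h3 : z 0 + 3 * z 1 ≤ 3)
    (he : z 1 = 0 ∨ z 0 - 3 * z 1 = -3 ∨ z 0 + 3 * z 1 = 3) : z ∈ U := by
  rcases he with h | h | h
  · exact (memU_iff z).mpr (Or.inl (mem_segment_of_coords pA pB z ((z 0 + 3)/6)
      (by linarith) (by linarith)
      (by rw [pA0, pB0]; ring) (by rw [pA1, pB1]; linarith)))
  · exact (memU_iff z).mpr (Or.inr (Or.inr (Or.inr (Or.inl (mem_segment_of_coords pA pG z (z 1)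
      (by linarith) (by linarith)
      (by rw [pA0, pG0]; linarith) (by rw [pA1, pG1]; ring))))))
  · exact (memU_iff z).mpr (Or.inr (Or.inr (Or.inr (Or.inr (Or.inl (mem_segment_of_coords pB pG z (z 1)
      (by linarith) (by linarith)
      (by rw [pB0, pG0]; linarith) (by rw [pB1, pG1]; ring)))))))

lemma R2_edge_mem (z : E2) (h1 : 0 ≤ z 0) (h2 : 3 ≤ z 0 + 3 * z 1) (h3 : z 0 + z 1 ≤ 3)
    (he : z 0 = 0 ∨ z 0 + 3 * z 1 = 3 ∨ z 0 + z 1 = 3) : z ∈ U := by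
  rcases he with h | h | h
  · exact (memU_iff z).mpr (Or.inr (Or.inr (Or.inr (Or.inr (Or.inr (mem_segment_of_coords pC pG z ((3 - z 1)/2)
      (by linarith) (by linarith)
      (by rw [pC0, pG0]; linarith) (by rw [pC1, pG1]; ring)))))))
  · exact (memU_iff z).mpr (Or.inr (Or.inr (Or.inr (Or.inr (Or.inl (mem_segment_of_coords pB pG z (z 1)
      (by linarith) (by linarith)
      (by rw [pB0, pG0]; linarith) (by rw [pB1, pG1]; ring)))))))
  · exact (memU_iff z).mpr (Or.inr (Or.inl (mem_segment_of_coords pB pC z (z 1 / 3)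
      (by linarith) (by linarith)
      (by rw [pB0, pC0]; linarith) (by rw [pB1, pC1]; ring))))

lemma R3_edge_mem (z : E2) (h1 : z 0 ≤ 0) (h2 : z 0 - 3 * z 1 ≤ -3) (h3 : z 1 - z 0 ≤ 3)
    (he : z 0 = 0 ∨ z 0 - 3 * z 1 = -3 ∨ z 1 - z 0 = 3) : z ∈ U := by
  rcases he with h | h | h
  · exact (memU_iff z).mpr (Or.inr (Or.inr (Or.inr (Or.inr (Or.inr (mem_segment_of_coords pC pG z ((3 - z 1)/2)
      (by linarith) (by linarith)
      (by rw [pC0, pG0]; linarith) (by rw [pC1, pG1]; ring)))))))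
  · exact (memU_iff z).mpr (Or.inr (Or.inr (Or.inr (Or.inl (mem_segment_of_coords pA pG z (z 1)
      (by linarith) (by linarith)
      (by rw [pA0, pG0]; linarith) (by rw [pA1, pG1]; ring))))))
  · exact (memU_iff z).mpr (Or.inr (Or.inr (Or.inl (mem_segment_of_coords pC pA z (-(z 0) / 3)
      (by linarith) (by linarith)
      (by rw [pC0, pA0]; ring) (by rw [pC1, pA1]; linarith)))))

lemma UinT (z : E2) (hz : z ∈ U) : 0 ≤ z 1 ∧ z 0 + z 1 ≤ 3 ∧ z 1 - z 0 ≤ 3 := by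
  rw [memU_iff] at hz
  rcases hz with h | h | h | h | h | h <;>
  · obtain ⟨t, ht0, ht1, hx, hy⟩ := coords_of_mem_segment _ _ _ h
    simp only [pA0, pA1, pB0, pB1, pC0, pC1, pG0, pG1] at hx hy
    exact ⟨by linarith, by linarith, by linarith⟩

lemma crossing_main (p q : E2)
    (hkey : ∀ u : ℝ, (p + u • (q - p)) ∈ U → u = 0 ∨ u = 1)
    (α1 β1 γ1 α2 β2 γ2 α3 β3 γ3 : ℝ)
    (hedge : ∀ z : E2,
      α1*z 0+β1*z 1+γ1 ≤ 0 → α2*z 0+β2*z 1+γ2 ≤ 0 → α3*z 0+β3*z 1+γ3 ≤ 0 →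
      (α1*z 0+β1*z 1+γ1 = 0 ∨ α2*z 0+β2*z 1+γ2 = 0 ∨ α3*z 0+β3*z 1+γ3 = 0) → z ∈ U)
    (hm1 : α1*((p 0+q 0)/2)+β1*((p 1+q 1)/2)+γ1 < 0)
    (hm2 : α2*((p 0+q 0)/2)+β2*((p 1+q 1)/2)+γ2 < 0)
    (hm3 : α3*((p 0+q 0)/2)+β3*((p 1+q 1)/2)+γ3 < 0)
    (hbp : 0 < α1*(q 0-p 0)+β1*(q 1-p 1) ∨ 0 < α2*(q 0-p 0)+β2*(q 1-p 1) ∨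
           0 < α3*(q 0-p 0)+β3*(q 1-p 1))
    (hbn : α1*(q 0-p 0)+β1*(q 1-p 1) < 0 ∨ α2*(q 0-p 0)+β2*(q 1-p 1) < 0 ∨
           α3*(q 0-p 0)+β3*(q 1-p 1) < 0) :
    (α1*q 0+β1*q 1+γ1 ≤ 0 ∧ α2*q 0+β2*q 1+γ2 ≤ 0 ∧ α3*q 0+β3*q 1+γ3 ≤ 0 ∧
      (α1*q 0+β1*q 1+γ1 = 0 ∨ α2*q 0+β2*q 1+γ2 = 0 ∨ α3*q 0+β3*q 1+γ3 = 0)) ∧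
    (α1*p 0+β1*p 1+γ1 ≤ 0 ∧ α2*p 0+β2*p 1+γ2 ≤ 0 ∧ α3*p 0+β3*p 1+γ3 ≤ 0 ∧
      (α1*p 0+β1*p 1+γ1 = 0 ∨ α2*p 0+β2*p 1+γ2 = 0 ∨ α3*p 0+β3*p 1+γ3 = 0)) := by
  constructor
  · obtain ⟨t, ht, c1, c2, c3, c4⟩ := cross_pos
      (α1*((p 0+q 0)/2)+β1*((p 1+q 1)/2)+γ1) (α1*(q 0-p 0)+β1*(q 1-p 1))
      (α2*((p 0+q 0)/2)+β2*((p 1+q 1)/2)+γ2) (α2*(q 0-p 0)+β2*(q 1-p 1))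
      (α3*((p 0+q 0)/2)+β3*((p 1+q 1)/2)+γ3) (α3*(q 0-p 0)+β3*(q 1-p 1))
      hm1 hm2 hm3 hbp
    have hz0 : (p + (1/2 + t) • (q - p)) 0 = p 0 + (1/2 + t) * (q 0 - p 0) := rfl
    have hz1 : (p + (1/2 + t) • (q - p)) 1 = p 1 + (1/2 + t) * (q 1 - p 1) := rfl
    have e1 : α1*((p + (1/2 + t) • (q - p)) 0)+β1*((p + (1/2 + t) • (q - p)) 1)+γ1
        = (α1*((p 0+q 0)/2)+β1*((p 1+q 1)/2)+γ1) + t*(α1*(q 0-p 0)+β1*(q 1-p 1)) := by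
      rw [hz0, hz1]; ring
    have e2 : α2*((p + (1/2 + t) • (q - p)) 0)+β2*((p + (1/2 + t) • (q - p)) 1)+γ2
        = (α2*((p 0+q 0)/2)+β2*((p 1+q 1)/2)+γ2) + t*(α2*(q 0-p 0)+β2*(q 1-p 1)) := by
      rw [hz0, hz1]; ring
    have e3 : α3*((p + (1/2 + t) • (q - p)) 0)+β3*((p + (1/2 + t) • (q - p)) 1)+γ3
        = (α3*((p 0+q 0)/2)+β3*((p 1+q 1)/2)+γ3) + t*(α3*(q 0-p 0)+β3*(q 1-p 1)) := by
      rw [hz0, hz1]; ring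
    have hzU : (p + (1/2 + t) • (q - p)) ∈ U := by
      refine hedge _ (by rw [e1]; exact c1) (by rw [e2]; exact c2) (by rw [e3]; exact c3) ?_
      rcases c4 with c | c | c
      · exact Or.inl (by rw [e1]; exact c)
      · exact Or.inr (Or.inl (by rw [e2]; exact c))
      · exact Or.inr (Or.inr (by rw [e3]; exact c))
    rcases hkey _ hzU with h0 | h1
    · exfalso; linarith
    · have ht2 : t = 1/2 := by linarith
      rw [ht2] at c1 c2 c3 c4
      have r1 : α1*q 0+β1*q 1+γ1
          = (α1*((p 0+q 0)/2)+β1*((p 1+q 1)/2)+γ1) + 1/2*(α1*(q 0-p 0)+β1*(q 1-p 1)) := by ring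
      have r2 : α2*q 0+β2*q 1+γ2
          = (α2*((p 0+q 0)/2)+β2*((p 1+q 1)/2)+γ2) + 1/2*(α2*(q 0-p 0)+β2*(q 1-p 1)) := by ring
      have r3 : α3*q 0+β3*q 1+γ3
          = (α3*((p 0+q 0)/2)+β3*((p 1+q 1)/2)+γ3) + 1/2*(α3*(q 0-p 0)+β3*(q 1-p 1)) := by ring
      refine ⟨by rw [r1]; exact c1, by rw [r2]; exact c2, by rw [r3]; exact c3, ?_⟩
      rcases c4 with c | c | c
      · exact Or.inl (by rw [r1]; exact c)
      · exact Or.inr (Or.inl (by rw [r2]; exact c))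
      · exact Or.inr (Or.inr (by rw [r3]; exact c))
  · obtain ⟨t, ht, c1, c2, c3, c4⟩ := cross_neg
      (α1*((p 0+q 0)/2)+β1*((p 1+q 1)/2)+γ1) (α1*(q 0-p 0)+β1*(q 1-p 1))
      (α2*((p 0+q 0)/2)+β2*((p 1+q 1)/2)+γ2) (α2*(q 0-p 0)+β2*(q 1-p 1))
      (α3*((p 0+q 0)/2)+β3*((p 1+q 1)/2)+γ3) (α3*(q 0-p 0)+β3*(q 1-p 1))
      hm1 hm2 hm3 hbn
    have hz0 : (p + (1/2 + t) • (q - p)) 0 = p 0 + (1/2 + t) * (q 0 - p 0) := rfl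
    have hz1 : (p + (1/2 + t) • (q - p)) 1 = p 1 + (1/2 + t) * (q 1 - p 1) := rfl
    have e1 : α1*((p + (1/2 + t) • (q - p)) 0)+β1*((p + (1/2 + t) • (q - p)) 1)+γ1
        = (α1*((p 0+q 0)/2)+β1*((p 1+q 1)/2)+γ1) + t*(α1*(q 0-p 0)+β1*(q 1-p 1)) := by
      rw [hz0, hz1]; ring
    have e2 : α2*((p + (1/2 + t) • (q - p)) 0)+β2*((p + (1/2 + t) • (q - p)) 1)+γ2
        = (α2*((p 0+q 0)/2)+β2*((p 1+q 1)/2)+γ2) + t*(α2*(q 0-p 0)+β2*(q 1-p 1)) := by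
      rw [hz0, hz1]; ring
    have e3 : α3*((p + (1/2 + t) • (q - p)) 0)+β3*((p + (1/2 + t) • (q - p)) 1)+γ3
        = (α3*((p 0+q 0)/2)+β3*((p 1+q 1)/2)+γ3) + t*(α3*(q 0-p 0)+β3*(q 1-p 1)) := by
      rw [hz0, hz1]; ring
    have hzU : (p + (1/2 + t) • (q - p)) ∈ U := by
      refine hedge _ (by rw [e1]; exact c1) (by rw [e2]; exact c2) (by rw [e3]; exact c3) ?_
      rcases c4 with c | c | c
      · exact Or.inl (by rw [e1]; exact c)
      · exact Or.inr (Or.inl (by rw [e2]; exact c))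
      · exact Or.inr (Or.inr (by rw [e3]; exact c))
    rcases hkey _ hzU with h0 | h1
    · have ht2 : t = -(1/2) := by linarith
      rw [ht2] at c1 c2 c3 c4
      have r1 : α1*p 0+β1*p 1+γ1
          = (α1*((p 0+q 0)/2)+β1*((p 1+q 1)/2)+γ1) + -(1/2)*(α1*(q 0-p 0)+β1*(q 1-p 1)) := by ring
      have r2 : α2*p 0+β2*p 1+γ2
          = (α2*((p 0+q 0)/2)+β2*((p 1+q 1)/2)+γ2) + -(1/2)*(α2*(q 0-p 0)+β2*(q 1-p 1)) := by ring
      have r3 : α3*p 0+β3*p 1+γ3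
          = (α3*((p 0+q 0)/2)+β3*((p 1+q 1)/2)+γ3) + -(1/2)*(α3*(q 0-p 0)+β3*(q 1-p 1)) := by ring
      refine ⟨by rw [r1]; exact c1, by rw [r2]; exact c2, by rw [r3]; exact c3, ?_⟩
      rcases c4 with c | c | c
      · exact Or.inl (by rw [r1]; exact c)
      · exact Or.inr (Or.inl (by rw [r2]; exact c))
      · exact Or.inr (Or.inr (by rw [r3]; exact c))
    · exfalso; linarith

set_option maxHeartbeats 2000000 in
lemma no_two (L : AffineSubspace ℝ E2) (p q : E2) (hpq : p ≠ q)
    (hInt : (L : Set E2) ∩ U = {p, q}) : False := by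
  have hset := Set.ext_iff.mp hInt
  have hmem : ∀ z : E2, z ∈ (L : Set E2) → z ∈ U → z = p ∨ z = q := by
    intro z h1 h2
    have := (hset z).mp ⟨h1, h2⟩
    simpa using this
  have hpLU : p ∈ (L : Set E2) ∩ U := (hset p).mpr (by simp)
  have hqLU : q ∈ (L : Set E2) ∩ U := (hset q).mpr (by simp)
  obtain ⟨hpL, hpU⟩ := hpLU
  obtain ⟨hqL, hqU⟩ := hqLU
  have hzL : ∀ u : ℝ, (p + u • (q - p)) ∈ (L : Set E2) := by
    intro u
    have h := AffineSubspace.smul_vsub_vadd_mem L u hqL hpL hpL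
    have e : u • (q -ᵥ p) +ᵥ p = p + u • (q - p) := by
      rw [vsub_eq_sub, vadd_eq_add]; exact add_comm _ _
    rwa [e] at h
  have hkey : ∀ u : ℝ, (p + u • (q - p)) ∈ U → u = 0 ∨ u = 1 := by
    intro u hu
    rcases hmem _ (hzL u) hu with h | h
    · left
      have h2 : u • (q - p) = 0 := add_eq_left.mp h
      rcases smul_eq_zero.mp h2 with h' | h'
      · exact h'
      · exact absurd (sub_eq_zero.mp h') (Ne.symm hpq)
    · right
      have h2 : u • (q - p) = q - p := eq_sub_of_add_eq' h
      have h3 : (u - 1) • (q - p) = 0 := by rw [sub_smul, one_smul, h2, sub_self]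
      rcases smul_eq_zero.mp h3 with h' | h'
      · linarith [h']
      · exact absurd (sub_eq_zero.mp h') (Ne.symm hpq)
  have hd : q 0 - p 0 ≠ 0 ∨ q 1 - p 1 ≠ 0 := by
    by_contra hc
    push_neg at hc
    exact hpq (pt_ext p q (by linarith [hc.1]) (by linarith [hc.2]))
  obtain ⟨hTp1, hTp2, hTp3⟩ := UinT p hpU
  obtain ⟨hTq1, hTq2, hTq3⟩ := UinT q hqU
  have hmU : (p + (1/2 : ℝ) • (q - p)) ∉ U := by
    intro h
    rcases hkey _ h with h' | h' <;> norm_num at h'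
  have mz0 : (p + (1/2 : ℝ) • (q - p)) 0 = (p 0 + q 0)/2 := by
    show p 0 + 1/2 * (q 0 - p 0) = _
    ring
  have mz1 : (p + (1/2 : ℝ) • (q - p)) 1 = (p 1 + q 1)/2 := by
    show p 1 + 1/2 * (q 1 - p 1) = _
    ring
  -- strict T inequalities at the midpoint
  have hsT1 : 0 < (p 1 + q 1)/2 := by
    rcases lt_or_eq_of_le (by linarith : (0:ℝ) ≤ (p 1 + q 1)/2) with h | h
    · exact h
    · exact absurd (T_edge_mem _ (by rw [mz1]; linarith) (by rw [mz0, mz1]; linarith)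
        (by rw [mz0, mz1]; linarith) (Or.inl (by rw [mz1]; linarith))) hmU
  have hsT2 : (p 0 + q 0)/2 + (p 1 + q 1)/2 < 3 := by
    rcases lt_or_eq_of_le (by linarith : (p 0 + q 0)/2 + (p 1 + q 1)/2 ≤ 3) with h | h
    · exact h
    · exact absurd (T_edge_mem _ (by rw [mz1]; linarith) (by rw [mz0, mz1]; linarith)
        (by rw [mz0, mz1]; linarith) (Or.inr (Or.inl (by rw [mz0, mz1]; linarith)))) hmU
  have hsT3 : (p 1 + q 1)/2 - (p 0 + q 0)/2 < 3 := by
    rcases lt_or_eq_of_le (by linarith : (p 1 + q 1)/2 - (p 0 + q 0)/2 ≤ 3) with h | h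
    · exact h
    · exact absurd (T_edge_mem _ (by rw [mz1]; linarith) (by rw [mz0, mz1]; linarith)
        (by rw [mz0, mz1]; linarith) (Or.inr (Or.inr (by rw [mz0, mz1]; linarith)))) hmU
  -- crossing with the big triangle T
  have hbpT : 0 < 0*(q 0-p 0)+(-1)*(q 1-p 1) ∨ 0 < 1*(q 0-p 0)+1*(q 1-p 1) ∨
      0 < (-1)*(q 0-p 0)+1*(q 1-p 1) := by
    by_contra hc
    push_neg at hc
    obtain ⟨c1, c2, c3⟩ := hc
    have hd1 : q 1 - p 1 = 0 := by linarith
    have hd0 : q 0 - p 0 = 0 := by linarith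
    rcases hd with h | h
    · exact h hd0
    · exact h hd1
  have hbnT : 0*(q 0-p 0)+(-1)*(q 1-p 1) < 0 ∨ 1*(q 0-p 0)+1*(q 1-p 1) < 0 ∨
      (-1)*(q 0-p 0)+1*(q 1-p 1) < 0 := by
    by_contra hc
    push_neg at hc
    obtain ⟨c1, c2, c3⟩ := hc
    have hd1 : q 1 - p 1 = 0 := by linarith
    have hd0 : q 0 - p 0 = 0 := by linarith
    rcases hd with h | h
    · exact h hd0
    · exact h hd1
  obtain ⟨EqT, EpT⟩ := crossing_main p q hkey 0 (-1) 0 1 1 (-3) (-1) 1 (-3)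
    (fun z h1 h2 h3 h4 => T_edge_mem z (by linarith) (by linarith) (by linarith)
      (by rcases h4 with h | h | h
          exacts [Or.inl (by linarith), Or.inr (Or.inl (by linarith)),
            Or.inr (Or.inr (by linarith))]))
    (by linarith) (by linarith) (by linarith) hbpT hbnT
  -- region 1 (triangle A B G) finisher
  have region1 : -3 < (p 0+q 0)/2 - 3*((p 1+q 1)/2) →
      (p 0+q 0)/2 + 3*((p 1+q 1)/2) < 3 → False := by
    intro hs1 hs2
    have hbpR : 0 < 0*(q 0-p 0)+(-1)*(q 1-p 1) ∨ 0 < (-1)*(q 0-p 0)+3*(q 1-p 1) ∨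
        0 < 1*(q 0-p 0)+3*(q 1-p 1) := by
      by_contra hc
      push_neg at hc
      obtain ⟨c1, c2, c3⟩ := hc
      have hd1 : q 1 - p 1 = 0 := by linarith
      have hd0 : q 0 - p 0 = 0 := by linarith
      rcases hd with h | h
      · exact h hd0
      · exact h hd1
    have hbnR : 0*(q 0-p 0)+(-1)*(q 1-p 1) < 0 ∨ (-1)*(q 0-p 0)+3*(q 1-p 1) < 0 ∨
        1*(q 0-p 0)+3*(q 1-p 1) < 0 := by
      by_contra hc
      push_neg at hc
      obtain ⟨c1, c2, c3⟩ := hc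
      have hd1 : q 1 - p 1 = 0 := by linarith
      have hd0 : q 0 - p 0 = 0 := by linarith
      rcases hd with h | h
      · exact h hd0
      · exact h hd1
    obtain ⟨EqR, EpR⟩ := crossing_main p q hkey 0 (-1) 0 (-1) 3 (-3) 1 3 (-3)
      (fun z h1 h2 h3 h4 => R1_edge_mem z (by linarith) (by linarith) (by linarith)
        (by rcases h4 with h | h | h
            exacts [Or.inl (by linarith), Or.inr (Or.inl (by linarith)),
              Or.inr (Or.inr (by linarith))]))
      (by linarith) (by linarith) (by linarith) hbpR hbnR
    have hq1 : q 1 = 0 := by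
      rcases EqT.2.2.2 with h | h | h <;> rcases EqR.2.2.2 with g | g | g <;>
        linarith only [h, g, EqT.1, EqT.2.1, EqT.2.2.1, EqR.1, EqR.2.1, EqR.2.2.1]
    have hp1 : p 1 = 0 := by
      rcases EpT.2.2.2 with h | h | h <;> rcases EpR.2.2.2 with g | g | g <;>
        linarith only [h, g, EpT.1, EpT.2.1, EpT.2.2.1, EpR.1, EpR.2.1, EpR.2.2.1]
    exact hmU (T_edge_mem _ (by rw [mz1]; linarith) (by rw [mz0, mz1]; linarith)
      (by rw [mz0, mz1]; linarith) (Or.inl (by rw [mz1]; linarith)))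
  by_cases hx : 0 ≤ (p 0 + q 0)/2
  · by_cases hbg : (p 0 + q 0)/2 + 3*((p 1 + q 1)/2) ≤ 3
    · -- region 1
      have hw : -3 ≤ (p 0+q 0)/2 - 3*((p 1+q 1)/2) := by linarith
      have hs2 : (p 0+q 0)/2 + 3*((p 1+q 1)/2) < 3 := by
        rcases lt_or_eq_of_le hbg with h | h
        · exact h
        · exact absurd (R1_edge_mem _ (by rw [mz1]; linarith) (by rw [mz0, mz1]; linarith)
            (by rw [mz0, mz1]; linarith) (Or.inr (Or.inr (by rw [mz0, mz1]; linarith)))) hmU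
      have hs1 : -3 < (p 0+q 0)/2 - 3*((p 1+q 1)/2) := by
        rcases lt_or_eq_of_le hw with h | h
        · exact h
        · exact absurd (R1_edge_mem _ (by rw [mz1]; linarith) (by rw [mz0, mz1]; linarith)
            (by rw [mz0, mz1]; linarith) (Or.inr (Or.inl (by rw [mz0, mz1]; linarith)))) hmU
      exact region1 hs1 hs2
    · -- region 2
      have hbg' : 3 < (p 0 + q 0)/2 + 3*((p 1 + q 1)/2) := not_le.mp hbg
      have hs0 : 0 < (p 0 + q 0)/2 := by
        rcases lt_or_eq_of_le hx with h | h
        · exact h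
        · exact absurd (R2_edge_mem _ (by rw [mz0]; linarith) (by rw [mz0, mz1]; linarith)
            (by rw [mz0, mz1]; linarith) (Or.inl (by rw [mz0]; linarith))) hmU
      have hbpR : 0 < (-1)*(q 0-p 0)+0*(q 1-p 1) ∨ 0 < (-1)*(q 0-p 0)+(-3)*(q 1-p 1) ∨
          0 < 1*(q 0-p 0)+1*(q 1-p 1) := by
        by_contra hc
        push_neg at hc
        obtain ⟨c1, c2, c3⟩ := hc
        have hd0 : q 0 - p 0 = 0 := by linarith
        have hd1 : q 1 - p 1 = 0 := by linarith
        rcases hd with h | h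
        · exact h hd0
        · exact h hd1
      have hbnR : (-1)*(q 0-p 0)+0*(q 1-p 1) < 0 ∨ (-1)*(q 0-p 0)+(-3)*(q 1-p 1) < 0 ∨
          1*(q 0-p 0)+1*(q 1-p 1) < 0 := by
        by_contra hc
        push_neg at hc
        obtain ⟨c1, c2, c3⟩ := hc
        have hd0 : q 0 - p 0 = 0 := by linarith
        have hd1 : q 1 - p 1 = 0 := by linarith
        rcases hd with h | h
        · exact h hd0
        · exact h hd1
      obtain ⟨EqR, EpR⟩ := crossing_main p q hkey (-1) 0 0 (-1) (-3) 3 1 1 (-3)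
        (fun z h1 h2 h3 h4 => R2_edge_mem z (by linarith) (by linarith) (by linarith)
          (by rcases h4 with h | h | h
              exacts [Or.inl (by linarith), Or.inr (Or.inl (by linarith)),
                Or.inr (Or.inr (by linarith))]))
        (by linarith) (by linarith) (by linarith) hbpR hbnR
      have hq1 : q 0 + q 1 = 3 := by
        rcases EqT.2.2.2 with h | h | h <;> rcases EqR.2.2.2 with g | g | g <;>
          linarith only [h, g, EqT.1, EqT.2.1, EqT.2.2.1, EqR.1, EqR.2.1, EqR.2.2.1]
      have hp1 : p 0 + p 1 = 3 := by
        rcases EpT.2.2.2 with h | h | h <;> rcases EpR.2.2.2 with g | g | g <;>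
          linarith only [h, g, EpT.1, EpT.2.1, EpT.2.2.1, EpR.1, EpR.2.1, EpR.2.2.1]
      exact hmU (T_edge_mem _ (by rw [mz1]; linarith) (by rw [mz0, mz1]; linarith)
        (by rw [mz0, mz1]; linarith) (Or.inr (Or.inl (by rw [mz0, mz1]; linarith))))
  · have hx' : (p 0 + q 0)/2 < 0 := not_le.mp hx
    by_cases hag : -3 ≤ (p 0 + q 0)/2 - 3*((p 1 + q 1)/2)
    · -- region 1 again
      have hs2 : (p 0+q 0)/2 + 3*((p 1+q 1)/2) < 3 := by linarith
      have hs1 : -3 < (p 0+q 0)/2 - 3*((p 1+q 1)/2) := by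
        rcases lt_or_eq_of_le hag with h | h
        · exact h
        · exact absurd (R1_edge_mem _ (by rw [mz1]; linarith) (by rw [mz0, mz1]; linarith)
            (by rw [mz0, mz1]; linarith) (Or.inr (Or.inl (by rw [mz0, mz1]; linarith)))) hmU
      exact region1 hs1 hs2
    · -- region 3
      have hag' : (p 0 + q 0)/2 - 3*((p 1 + q 1)/2) < -3 := not_le.mp hag
      have hbpR : 0 < 1*(q 0-p 0)+0*(q 1-p 1) ∨ 0 < 1*(q 0-p 0)+(-3)*(q 1-p 1) ∨
          0 < (-1)*(q 0-p 0)+1*(q 1-p 1) := by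
        by_contra hc
        push_neg at hc
        obtain ⟨c1, c2, c3⟩ := hc
        have hd0 : q 0 - p 0 = 0 := by linarith
        have hd1 : q 1 - p 1 = 0 := by linarith
        rcases hd with h | h
        · exact h hd0
        · exact h hd1
      have hbnR : 1*(q 0-p 0)+0*(q 1-p 1) < 0 ∨ 1*(q 0-p 0)+(-3)*(q 1-p 1) < 0 ∨
          (-1)*(q 0-p 0)+1*(q 1-p 1) < 0 := by
        by_contra hc
        push_neg at hc
        obtain ⟨c1, c2, c3⟩ := hc
        have hd0 : q 0 - p 0 = 0 := by linarith
        have hd1 : q 1 - p 1 = 0 := by linarith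
        rcases hd with h | h
        · exact h hd0
        · exact h hd1
      obtain ⟨EqR, EpR⟩ := crossing_main p q hkey 1 0 0 1 (-3) 3 (-1) 1 (-3)
        (fun z h1 h2 h3 h4 => R3_edge_mem z (by linarith) (by linarith) (by linarith)
          (by rcases h4 with h | h | h
              exacts [Or.inl (by linarith), Or.inr (Or.inl (by linarith)),
                Or.inr (Or.inr (by linarith))]))
        (by linarith) (by linarith) (by linarith) hbpR hbnR
      have hq1 : q 1 - q 0 = 3 := by
        rcases EqT.2.2.2 with h | h | h <;> rcases EqR.2.2.2 with g | g | g <;>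
          linarith only [h, g, EqT.1, EqT.2.1, EqT.2.2.1, EqR.1, EqR.2.1, EqR.2.2.1]
      have hp1 : p 1 - p 0 = 3 := by
        rcases EpT.2.2.2 with h | h | h <;> rcases EpR.2.2.2 with g | g | g <;>
          linarith only [h, g, EpT.1, EpT.2.1, EpT.2.2.1, EpR.1, EpR.2.1, EpR.2.2.1]
      exact hmU (T_edge_mem _ (by rw [mz1]; linarith) (by rw [mz0, mz1]; linarith)
        (by rw [mz0, mz1]; linarith) (Or.inr (Or.inr (by rw [mz0, mz1]; linarith))))

lemma not_collinear_U : ¬ Collinear ℝ U := by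
  intro h
  have hA : pA ∈ U := (memU_iff pA).mpr (Or.inl (left_mem_segment ℝ pA pB))
  have hB : pB ∈ U := (memU_iff pB).mpr (Or.inl (right_mem_segment ℝ pA pB))
  have hC : pC ∈ U := (memU_iff pC).mpr (Or.inr (Or.inl (right_mem_segment ℝ pB pC)))
  rw [collinear_iff_of_mem hA] at h
  obtain ⟨v, hv⟩ := h
  obtain ⟨rB, hrB⟩ := hv pB hB
  obtain ⟨rC, hrC⟩ := hv pC hC
  have eB0 : pB 0 = rB * v 0 + pA 0 := by rw [hrB]; rfl
  have eB1 : pB 1 = rB * v 1 + pA 1 := by rw [hrB]; rfl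
  have eC0 : pC 0 = rC * v 0 + pA 0 := by rw [hrC]; rfl
  have eC1 : pC 1 = rC * v 1 + pA 1 := by rw [hrC]; rfl
  rw [pB0, pA0] at eB0
  rw [pB1, pA1] at eB1
  rw [pC0, pA0] at eC0
  rw [pC1, pA1] at eC1
  -- eB0 : 3 = rB * v 0 + -3, eB1 : 0 = rB * v 1 + 0
  -- eC0 : 0 = rC * v 0 + -3, eC1 : 3 = rC * v 1 + 0
  have hBv1 : rB * v 1 = 0 := by linarith
  rcases mul_eq_zero.mp hBv1 with h' | h'
  · rw [h'] at eB0; norm_num at eB0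
  · rw [h'] at eC1; norm_num at eC1

lemma Fam_nondeg : ∀ s ∈ Fam, s.1 ≠ s.2 := by
  classical
  intro s hs
  simp only [Fam, Finset.mem_insert, Finset.mem_singleton] at hs
  rcases hs with rfl | rfl | rfl | rfl | rfl | rfl
  · exact hAB
  · exact hBC
  · exact hCA
  · exact hAG
  · exact hBG
  · exact hCG

set_option maxHeartbeats 2000000 in
lemma Fam_pairwise : (Fam : Set (E2 × E2)).Pairwise
    fun s t => Disjoint (openSegment ℝ s.1 s.2) (openSegment ℝ t.1 t.2) := by
  classical
  intro s hs t ht hst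
  simp only [Fam, Finset.coe_insert, Set.mem_insert_iff, Finset.coe_singleton,
    Set.mem_singleton_iff] at hs ht
  rcases hs with rfl | rfl | rfl | rfl | rfl | rfl <;>
    rcases ht with rfl | rfl | rfl | rfl | rfl | rfl <;>
    first
      | exact absurd rfl hst
      | · apply openSeg_disj
          intro u v hu0 hu1 hv0 hv1
          simp only [pA0, pA1, pB0, pB1, pC0, pC1, pG0, pG1]
          rintro ⟨e1, e2⟩
          linarith

theorem exists_six_segments_counterexample :
    ∃ F : Finset (EuclideanSpace ℝ (Fin 2) × EuclideanSpace ℝ (Fin 2)),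
      F.card = 6 ∧
      (∀ s ∈ F, s.1 ≠ s.2) ∧
      ((F : Set (EuclideanSpace ℝ (Fin 2) × EuclideanSpace ℝ (Fin 2))).Pairwise
        fun s t => Disjoint (openSegment ℝ s.1 s.2) (openSegment ℝ t.1 t.2)) ∧
      ¬ Collinear ℝ (⋃ s ∈ F, segment ℝ s.1 s.2) ∧
      ∀ L : AffineSubspace ℝ (EuclideanSpace ℝ (Fin 2)), IsLine L →
        ¬ ∃ p q, p ≠ q ∧
          (L : Set (EuclideanSpace ℝ (Fin 2))) ∩ (⋃ s ∈ F, segment ℝ s.1 s.2) = {p, q} := by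
  refine ⟨Fam, Fam_card, Fam_nondeg, Fam_pairwise, not_collinear_U, ?_⟩
  rintro L - ⟨p, q, hpq, hInt⟩
  exact no_two L p q hpq hInt
end
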